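/- arXiv:1006.5360 — 3 statements merged into one kernel-verified Lean document; each statement's English description precedes it below -/
import Mathlib

section
/- Assume (ξ, ζ) is a Neumann pair for V and let s ∈ (0,1). Define g : [0,1] → ℝ by g(r) = ξ(r)/ξ(s) for r ∈ [0,s] and g(r) = ζ(r)/ζ(s) for r ∈ (s,1] (so that g(r) = G(r,s)/G(s,s)). Then ∫₀¹ (g'(r)² + V(r)·g(r)²)·r^{n−1} dr = 1/(ξ(s)·ζ(s)) = F(s), where g'(r) denotes the derivative of g at r (defined for r ∈ (0,1], r ≠ s). -/
/-!
For a solution `u` of `-u'' - ((n-1)/r) u' + V u = 0` the energy density `r^(n-1) (u'^2 + V u^2)`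
is the derivative of the flux `r^(n-1) u u'`. Hence the energy of `ξ` on `(0,s)` is
`s^(n-1) ξ(s) ξ'(s)`, the flux vanishing at `0` because `ξ'(0⁺) = 0`, and the energy of `ζ` on
`(s,1)` is `-s^(n-1) ζ(s) ζ'(s)` because `ζ'(1) = 0`. Dividing by `ξ(s)^2` and `ζ(s)^2` and adding
gives `s^(n-1) (ξ' ζ - ξ ζ')(s) / (ξ(s) ζ(s))`, which the Wronskian identity reduces to
`1 / (ξ(s) ζ(s))`.
-/

open Set Filter MeasureTheory Topology

/-- A *Neumann pair* for the radial operator `-u'' - ((n-1)/r) u' + V u` on `(0,1]`: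
two positive solutions `ξ, ζ` (with first derivatives `ξ', ζ'` and second derivatives
`ξ'', ζ''` on `(0,1]`), continuous on `[0,1]`, twice continuously differentiable on `(0,1]`,
with `ξ'(0⁺) = 0`, `ζ'(1) = 0` and Wronskian `ξ' ζ - ξ ζ' = r^(1-n)`. -/
structure NeumannPair (n : ℕ) (V ξ ζ ξ' ζ' ξ'' ζ'' : ℝ → ℝ) : Prop where
  cont_xi : ContinuousOn ξ (Icc 0 1)
  cont_zeta : ContinuousOn ζ (Icc 0 1)
  pos_xi : ∀ r ∈ Ioc (0:ℝ) 1, 0 < ξ r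
  pos_zeta : ∀ r ∈ Ioc (0:ℝ) 1, 0 < ζ r
  deriv_xi : ∀ r ∈ Ioc (0:ℝ) 1, HasDerivWithinAt ξ (ξ' r) (Ioc 0 1) r
  deriv2_xi : ∀ r ∈ Ioc (0:ℝ) 1, HasDerivWithinAt ξ' (ξ'' r) (Ioc 0 1) r
  cont_xi'' : ContinuousOn ξ'' (Ioc 0 1)
  deriv_zeta : ∀ r ∈ Ioc (0:ℝ) 1, HasDerivWithinAt ζ (ζ' r) (Ioc 0 1) r
  deriv2_zeta : ∀ r ∈ Ioc (0:ℝ) 1, HasDerivWithinAt ζ' (ζ'' r) (Ioc 0 1) r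
  cont_zeta'' : ContinuousOn ζ'' (Ioc 0 1)
  ode_xi : ∀ r ∈ Ioc (0:ℝ) 1, -ξ'' r - (((n:ℝ) - 1) / r) * ξ' r + V r * ξ r = 0
  ode_zeta : ∀ r ∈ Ioc (0:ℝ) 1, -ζ'' r - (((n:ℝ) - 1) / r) * ζ' r + V r * ζ r = 0
  bc_xi : Tendsto ξ' (𝓝[>] (0:ℝ)) (𝓝 0)
  bc_zeta : ζ' 1 = 0
  wronskian : ∀ r ∈ Ioc (0:ℝ) 1, ξ' r * ζ r - ξ r * ζ' r = r ^ (1 - (n:ℝ))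

noncomputable def radialFlux (e : ℝ) (u u' : ℝ → ℝ) (r : ℝ) : ℝ := r ^ e * (u r * u' r)

noncomputable def radialEnergyDensity (e : ℝ) (V u u' : ℝ → ℝ) (r : ℝ) : ℝ :=
  (u' r ^ 2 + V r * u r ^ 2) * r ^ e

lemma continuousOn_Icc_of_continuousOn_Ioc {α β : Type*} [LinearOrder α] [TopologicalSpace α]
    [OrderTopology α] [TopologicalSpace β] {f : α → β} {a b : α} (hab : a ≤ b)
    (hf : ContinuousOn f (Ioc a b)) (ha : Tendsto f (𝓝[>] a) (𝓝 (f a))) :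
    ContinuousOn f (Icc a b) := by
  rw [← Ioc_insert_left hab]
  rintro x (rfl | hx)
  · exact (continuousWithinAt_Ioi_iff_Ici.mp ha).mono
      (insert_subset self_mem_Ici fun _ hy => hy.1.le)
  · exact (hf x hx).insert'

lemma tendsto_rpow_nhdsGT_zero {e : ℝ} (he : 0 < e) :
    Tendsto (fun r : ℝ => r ^ e) (𝓝[>] 0) (𝓝 0) := by
  simpa [Real.zero_rpow he.ne'] using
    (Real.continuousAt_rpow_const 0 e (Or.inr he.le)).tendsto.mono_left nhdsWithin_le_nhds

lemma tendsto_nhdsGT_zero_of_continuousOn {f : ℝ → ℝ} (hf : ContinuousOn f (Icc 0 1)) :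
    Tendsto f (𝓝[>] 0) (𝓝 (f 0)) :=
  (hf 0 ⟨le_rfl, zero_le_one⟩).mono_of_mem_nhdsWithin (Icc_mem_nhdsGT zero_lt_one)

lemma integral_Ioo_eq_sub_of_hasDerivAt {f F : ℝ → ℝ} {a b : ℝ} (hab : a ≤ b)
    (hF : ContinuousOn F (Icc a b)) (hf : ContinuousOn f (Icc a b))
    (hderiv : ∀ x ∈ Ioo a b, HasDerivAt F (f x) x) :
    ∫ x in Ioo a b, f x = F b - F a := by
  rw [← integral_Ioc_eq_integral_Ioo, ← intervalIntegral.integral_of_le hab]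
  exact intervalIntegral.integral_eq_sub_of_hasDerivAt_of_le hab hF hderiv
    (hf.intervalIntegrable_of_Icc hab)

lemma setIntegral_Ioo_eq_add {f : ℝ → ℝ} {a b c : ℝ} (hab : a ≤ b) (hbc : b ≤ c)
    (hfab : IntegrableOn f (Ioo a b)) (hfbc : IntegrableOn f (Ioo b c)) :
    ∫ x in Ioo a c, f x = (∫ x in Ioo a b, f x) + ∫ x in Ioo b c, f x := by
  simp only [← integral_Ioc_eq_integral_Ioo, ← intervalIntegral.integral_of_le,
    hab, hbc, hab.trans hbc]
  exact (intervalIntegral.integral_add_adjacent_intervals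
    ((intervalIntegrable_iff_integrableOn_Ioo_of_le hab).mpr hfab)
    ((intervalIntegrable_iff_integrableOn_Ioo_of_le hbc).mpr hfbc)).symm

lemma integrableOn_Ioo_of_eqOn_div {f φ : ℝ → ℝ} {a b c : ℝ} (hφ : ContinuousOn φ (Icc a b))
    (hf : EqOn f (fun r => φ r / c) (Ioo a b)) : IntegrableOn f (Ioo a b) :=
  IntegrableOn.congr_fun ((hφ.integrableOn_Icc.mono_set Ioo_subset_Icc_self).div_const c)
    hf.symm measurableSet_Ioo

section Radial

variable {e : ℝ} {V u u' : ℝ → ℝ}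

lemma hasDerivAt_radialFlux {u'' : ℝ → ℝ} {r : ℝ} (hr : 0 < r)
    (hu : HasDerivAt u (u' r) r) (hu' : HasDerivAt u' (u'' r) r)
    (hode : -u'' r - (e / r) * u' r + V r * u r = 0) :
    HasDerivAt (radialFlux e u u') (radialEnergyDensity e V u u' r) r := by
  refine ((Real.hasDerivAt_rpow_const (Or.inl hr.ne')).mul (hu.mul hu')).congr_deriv ?_
  have hu'' : u'' r = V r * u r - e / r * u' r := by linarith
  rw [hu'', Real.rpow_sub hr, Real.rpow_one, radialEnergyDensity, Pi.mul_apply]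
  field_simp
  ring

lemma continuousOn_radialFlux {S : Set ℝ} (hS : S ⊆ Ioi 0)
    (hu : ContinuousOn u S) (hu' : ContinuousOn u' S) :
    ContinuousOn (radialFlux e u u') S :=
  (continuousOn_id.rpow_const fun _ hr => Or.inl (hS hr).ne').mul (hu.mul hu')

lemma continuousOn_radialEnergyDensity {S : Set ℝ} (hS : S ⊆ Ioi 0) (hV : ContinuousOn V S)
    (hu : ContinuousOn u S) (hu' : ContinuousOn u' S) :
    ContinuousOn (radialEnergyDensity e V u u') S :=
  ((hu'.pow 2).add (hV.mul (hu.pow 2))).mul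
    (continuousOn_id.rpow_const fun _ hr => Or.inl (hS hr).ne')

lemma radialEnergyDensity_of_eventuallyEq_div {g : ℝ → ℝ} {c r : ℝ}
    (hg : g =ᶠ[𝓝 r] fun x => u x / c) (hu : HasDerivAt u (u' r) r) :
    radialEnergyDensity e V g (deriv g) r = radialEnergyDensity e V u u' r / c ^ 2 := by
  have hderiv : deriv g r = u' r / c := by
    rw [hg.deriv_eq]
    exact (hu.div_const c).deriv
  simp only [radialEnergyDensity, hderiv, hg.eq_of_nhds, div_pow]
  ring

end Radial

namespace NeumannPair

variable {n : ℕ} {V ξ ζ ξ' ζ' ξ'' ζ'' : ℝ → ℝ}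

lemma continuousOn_deriv_xi (h : NeumannPair n V ξ ζ ξ' ζ' ξ'' ζ'') :
    ContinuousOn ξ' (Ioc 0 1) := fun r hr => (h.deriv2_xi r hr).continuousWithinAt

lemma continuousOn_deriv_zeta (h : NeumannPair n V ξ ζ ξ' ζ' ξ'' ζ'') :
    ContinuousOn ζ' (Ioc 0 1) := fun r hr => (h.deriv2_zeta r hr).continuousWithinAt

lemma hasDerivAt_radialFlux_xi (h : NeumannPair n V ξ ζ ξ' ζ' ξ'' ζ'') {r : ℝ}
    (hr : r ∈ Ioo 0 1) :
    HasDerivAt (radialFlux (n - 1) ξ ξ') (radialEnergyDensity (n - 1) V ξ ξ' r) r :=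
  hasDerivAt_radialFlux hr.1
    ((h.deriv_xi r (Ioo_subset_Ioc_self hr)).hasDerivAt (Ioc_mem_nhds hr.1 hr.2))
    ((h.deriv2_xi r (Ioo_subset_Ioc_self hr)).hasDerivAt (Ioc_mem_nhds hr.1 hr.2))
    (h.ode_xi r (Ioo_subset_Ioc_self hr))

lemma hasDerivAt_radialFlux_zeta (h : NeumannPair n V ξ ζ ξ' ζ' ξ'' ζ'') {r : ℝ}
    (hr : r ∈ Ioo 0 1) :
    HasDerivAt (radialFlux (n - 1) ζ ζ') (radialEnergyDensity (n - 1) V ζ ζ' r) r :=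
  hasDerivAt_radialFlux hr.1
    ((h.deriv_zeta r (Ioo_subset_Ioc_self hr)).hasDerivAt (Ioc_mem_nhds hr.1 hr.2))
    ((h.deriv2_zeta r (Ioo_subset_Ioc_self hr)).hasDerivAt (Ioc_mem_nhds hr.1 hr.2))
    (h.ode_zeta r (Ioo_subset_Ioc_self hr))

/-- At `0` the flux is `0 ^ (n - 1) * (ξ 0 * ξ' 0) = 0`, whatever the junk value `ξ' 0`. -/
lemma continuousOn_radialFlux_xi (h : NeumannPair n V ξ ζ ξ' ζ' ξ'' ζ'') (hn : 2 ≤ n) :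
    ContinuousOn (radialFlux (n - 1) ξ ξ') (Icc 0 1) := by
  have he : (0 : ℝ) < n - 1 := sub_pos.mpr (Nat.one_lt_cast.mpr hn)
  refine continuousOn_Icc_of_continuousOn_Ioc zero_le_one
    (continuousOn_radialFlux (fun _ hr => hr.1) (h.cont_xi.mono Ioc_subset_Icc_self)
      h.continuousOn_deriv_xi) ?_
  convert (tendsto_rpow_nhdsGT_zero he).mul
    ((tendsto_nhdsGT_zero_of_continuousOn h.cont_xi).mul h.bc_xi) using 2 <;>
    simp [radialFlux, Real.zero_rpow he.ne']

lemma continuousOn_radialEnergyDensity_xi (h : NeumannPair n V ξ ζ ξ' ζ' ξ'' ζ'') (hn : 2 ≤ n)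
    (hV : ContinuousOn V (Icc 0 1)) :
    ContinuousOn (radialEnergyDensity (n - 1) V ξ ξ') (Icc 0 1) := by
  have he : (0 : ℝ) < n - 1 := sub_pos.mpr (Nat.one_lt_cast.mpr hn)
  refine continuousOn_Icc_of_continuousOn_Ioc zero_le_one
    (continuousOn_radialEnergyDensity (fun _ hr => hr.1) (hV.mono Ioc_subset_Icc_self)
      (h.cont_xi.mono Ioc_subset_Icc_self) h.continuousOn_deriv_xi) ?_
  convert ((h.bc_xi.pow 2).add ((tendsto_nhdsGT_zero_of_continuousOn hV).mul
    ((tendsto_nhdsGT_zero_of_continuousOn h.cont_xi).pow 2))).mul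
    (tendsto_rpow_nhdsGT_zero he) using 2 <;>
    simp [radialEnergyDensity, Real.zero_rpow he.ne']

lemma integral_radialEnergyDensity_xi (h : NeumannPair n V ξ ζ ξ' ζ' ξ'' ζ'') (hn : 2 ≤ n)
    (hV : ContinuousOn V (Icc 0 1)) {s : ℝ} (hs : s ∈ Ioc 0 1) :
    ∫ r in Ioo 0 s, radialEnergyDensity (n - 1) V ξ ξ' r = radialFlux (n - 1) ξ ξ' s := by
  have he : (0 : ℝ) < n - 1 := sub_pos.mpr (Nat.one_lt_cast.mpr hn)
  have hsub : Icc 0 s ⊆ Icc 0 1 := Icc_subset_Icc_right hs.2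
  rw [integral_Ioo_eq_sub_of_hasDerivAt hs.1.le ((h.continuousOn_radialFlux_xi hn).mono hsub)
    ((h.continuousOn_radialEnergyDensity_xi hn hV).mono hsub)
    fun r hr => h.hasDerivAt_radialFlux_xi ⟨hr.1, hr.2.trans_le hs.2⟩]
  simp [radialFlux, Real.zero_rpow he.ne']

lemma continuousOn_radialFlux_zeta (h : NeumannPair n V ξ ζ ξ' ζ' ξ'' ζ'') :
    ContinuousOn (radialFlux (n - 1) ζ ζ') (Ioc 0 1) :=
  continuousOn_radialFlux (fun _ hr => hr.1) (h.cont_zeta.mono Ioc_subset_Icc_self)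
    h.continuousOn_deriv_zeta

lemma continuousOn_radialEnergyDensity_zeta (h : NeumannPair n V ξ ζ ξ' ζ' ξ'' ζ'')
    (hV : ContinuousOn V (Icc 0 1)) :
    ContinuousOn (radialEnergyDensity (n - 1) V ζ ζ') (Ioc 0 1) :=
  continuousOn_radialEnergyDensity (fun _ hr => hr.1) (hV.mono Ioc_subset_Icc_self)
    (h.cont_zeta.mono Ioc_subset_Icc_self) h.continuousOn_deriv_zeta

lemma integral_radialEnergyDensity_zeta (h : NeumannPair n V ξ ζ ξ' ζ' ξ'' ζ'')
    (hV : ContinuousOn V (Icc 0 1)) {s : ℝ} (hs : s ∈ Ioc 0 1) :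
    ∫ r in Ioo s 1, radialEnergyDensity (n - 1) V ζ ζ' r = -radialFlux (n - 1) ζ ζ' s := by
  have hsub : Icc s 1 ⊆ Ioc 0 1 := fun r hr => ⟨hs.1.trans_le hr.1, hr.2⟩
  rw [integral_Ioo_eq_sub_of_hasDerivAt hs.2 (h.continuousOn_radialFlux_zeta.mono hsub)
    ((h.continuousOn_radialEnergyDensity_zeta hV).mono hsub)
    fun r hr => h.hasDerivAt_radialFlux_zeta ⟨hs.1.trans hr.1, hr.2⟩]
  simp [radialFlux, h.bc_zeta]

variable {s : ℝ} {g : ℝ → ℝ}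

lemma eqOn_radialEnergyDensity_of_le (h : NeumannPair n V ξ ζ ξ' ζ' ξ'' ζ'') (hs : s ∈ Ioo 0 1)
    (hg : ∀ r, g r = if r ≤ s then ξ r / ξ s else ζ r / ζ s) :
    EqOn (radialEnergyDensity (n - 1) V g (deriv g))
      (fun r => radialEnergyDensity (n - 1) V ξ ξ' r / ξ s ^ 2) (Ioo 0 s) := fun r hr =>
  radialEnergyDensity_of_eventuallyEq_div
    (eventually_of_mem (Iio_mem_nhds hr.2) fun x hx => by rw [hg, if_pos hx.le])
    ((h.deriv_xi r ⟨hr.1, (hr.2.trans hs.2).le⟩).hasDerivAt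
      (Ioc_mem_nhds hr.1 (hr.2.trans hs.2)))

lemma eqOn_radialEnergyDensity_of_gt (h : NeumannPair n V ξ ζ ξ' ζ' ξ'' ζ'') (hs : s ∈ Ioo 0 1)
    (hg : ∀ r, g r = if r ≤ s then ξ r / ξ s else ζ r / ζ s) :
    EqOn (radialEnergyDensity (n - 1) V g (deriv g))
      (fun r => radialEnergyDensity (n - 1) V ζ ζ' r / ζ s ^ 2) (Ioo s 1) := fun r hr =>
  radialEnergyDensity_of_eventuallyEq_div
    (eventually_of_mem (Ioi_mem_nhds hr.1) fun x hx => by rw [hg, if_neg (not_le.mpr hx)])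
    ((h.deriv_zeta r ⟨hs.1.trans hr.1, hr.2.le⟩).hasDerivAt
      (Ioc_mem_nhds (hs.1.trans hr.1) hr.2))

end NeumannPair

theorem energy_of_normalized_green_general (n : ℕ) (hn : 2 ≤ n) (V ξ ζ ξ' ζ' ξ'' ζ'' : ℝ → ℝ)
    (hVcont : ContinuousOn V (Icc 0 1))
    (hpair : NeumannPair n V ξ ζ ξ' ζ' ξ'' ζ'')
    (s : ℝ) (hs : s ∈ Ioo (0:ℝ) 1)
    (g : ℝ → ℝ) (hg : ∀ r, g r = if r ≤ s then ξ r / ξ s else ζ r / ζ s) :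
    ∫ r in Ioo (0:ℝ) 1, (deriv g r ^ 2 + V r * g r ^ 2) * r ^ ((n:ℝ) - 1) =
      1 / (ξ s * ζ s) := by
  have hs' : s ∈ Ioc 0 1 := Ioo_subset_Ioc_self hs
  have hξs : 0 < ξ s := hpair.pos_xi s hs'
  have hζs : 0 < ζ s := hpair.pos_zeta s hs'
  have hg_xi := hpair.eqOn_radialEnergyDensity_of_le hs hg
  have hg_zeta := hpair.eqOn_radialEnergyDensity_of_gt hs hg
  have hint_xi : IntegrableOn (radialEnergyDensity (n - 1) V g (deriv g)) (Ioo 0 s) :=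
    integrableOn_Ioo_of_eqOn_div ((hpair.continuousOn_radialEnergyDensity_xi hn hVcont).mono
      (Icc_subset_Icc_right hs'.2)) hg_xi
  have hint_zeta : IntegrableOn (radialEnergyDensity (n - 1) V g (deriv g)) (Ioo s 1) :=
    integrableOn_Ioo_of_eqOn_div ((hpair.continuousOn_radialEnergyDensity_zeta hVcont).mono
      fun r hr => ⟨hs.1.trans_le hr.1, hr.2⟩) hg_zeta
  show ∫ r in Ioo (0:ℝ) 1, radialEnergyDensity (n - 1) V g (deriv g) r = _
  calc _ = (∫ r in Ioo 0 s, radialEnergyDensity (n - 1) V g (deriv g) r) +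
        ∫ r in Ioo s 1, radialEnergyDensity (n - 1) V g (deriv g) r :=
        setIntegral_Ioo_eq_add hs.1.le hs'.2 hint_xi hint_zeta
    _ = radialFlux (n - 1) ξ ξ' s / ξ s ^ 2 + -radialFlux (n - 1) ζ ζ' s / ζ s ^ 2 := by
        rw [setIntegral_congr_fun measurableSet_Ioo hg_xi,
          setIntegral_congr_fun measurableSet_Ioo hg_zeta, integral_div, integral_div,
          hpair.integral_radialEnergyDensity_xi hn hVcont hs',
          hpair.integral_radialEnergyDensity_zeta hVcont hs']
    _ = s ^ ((n : ℝ) - 1) * (ξ' s * ζ s - ξ s * ζ' s) / (ξ s * ζ s) := by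
        unfold radialFlux
        field_simp
        ring
    _ = 1 / (ξ s * ζ s) := by
        rw [hpair.wronskian s hs', ← Real.rpow_add hs.1]
        norm_num

/-- Energy of the normalized Green function equals `F(s)`: if `(ξ, ζ)` is a Neumann pair
for `V`, `s ∈ (0,1)` and `g(r) = ξ(r)/ξ(s)` for `r ≤ s`, `g(r) = ζ(r)/ζ(s)` for `r > s`
(so `g(r) = G(r,s)/G(s,s)`), then
`∫₀¹ (g'(r)² + V(r) g(r)²) r^(n-1) dr = 1/(ξ(s)ζ(s)) = F(s)`. -/
theorem energy_of_normalized_green (n : ℕ) (hn : 2 ≤ n) (V ξ ζ ξ' ζ' ξ'' ζ'' : ℝ → ℝ)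
    (hVcont : ContinuousOn V (Icc 0 1))
    (hVnonneg : ∀ r ∈ Icc (0:ℝ) 1, 0 ≤ V r)
    (hVnontriv : ∃ r ∈ Icc (0:ℝ) 1, V r ≠ 0)
    (hpair : NeumannPair n V ξ ζ ξ' ζ' ξ'' ζ'')
    (s : ℝ) (hs : s ∈ Ioo (0:ℝ) 1)
    (g : ℝ → ℝ) (hg : ∀ r, g r = if r ≤ s then ξ r / ξ s else ζ r / ζ s) :
    ∫ r in Ioo (0:ℝ) 1, (deriv g r ^ 2 + V r * g r ^ 2) * r ^ ((n:ℝ) - 1) =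
      1 / (ξ s * ζ s) :=
  energy_of_normalized_green_general n hn V ξ ζ ξ' ζ' ξ'' ζ'' hVcont hpair s hs g hg
end

section
/- Assume (ξ, ζ) is a Neumann pair for V. Then ξ'(r) ≥ 0 and ζ'(r) ≤ 0 for all r ∈ (0,1]; in particular ξ is nondecreasing and ζ is nonincreasing on (0,1], and consequently G(r,s) ≤ G(s,s) for all r, s ∈ (0,1]. -/
/-!
Writing the radial equation as `(r^(n-1) u')' = r^(n-1) V u`, the flux `r^(n-1) u'` of a
positive solution is nondecreasing on `(0,1]` because `V ≥ 0`. For `ξ` the flux tends to `0`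
at `0⁺`, so it is nonnegative; for `ζ` it vanishes at `1`, so it is nonpositive. Hence `ξ`
increases and `ζ` decreases, which puts the maximum of `r ↦ ξ(min r s) ζ(max r s)` at `r = s`.
-/

open Set Filter MeasureTheory Topology

section Monotonicity

variable {D : Set ℝ} {f f' : ℝ → ℝ}

theorem Convex.monotoneOn_of_hasDerivWithinAt_nonneg (hD : Convex ℝ D)
    (hf : ∀ x ∈ D, HasDerivWithinAt f (f' x) D x) (hf' : ∀ x ∈ D, 0 ≤ f' x) :
    MonotoneOn f D :=
  _root_.monotoneOn_of_hasDerivWithinAt_nonneg hD (fun x hx => (hf x hx).continuousWithinAt)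
    (fun x hx => (hf x (interior_subset hx)).mono interior_subset)
    (fun x hx => hf' x (interior_subset hx))

theorem Convex.antitoneOn_of_hasDerivWithinAt_nonpos (hD : Convex ℝ D)
    (hf : ∀ x ∈ D, HasDerivWithinAt f (f' x) D x) (hf' : ∀ x ∈ D, f' x ≤ 0) :
    AntitoneOn f D :=
  _root_.antitoneOn_of_hasDerivWithinAt_nonpos hD (fun x hx => (hf x hx).continuousWithinAt)
    (fun x hx => (hf x (interior_subset hx)).mono interior_subset)
    (fun x hx => hf' x (interior_subset hx))

theorem MonotoneOn.le_of_tendsto_nhdsGT {a b l : ℝ} (hf : MonotoneOn f (Ioc a b))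
    (hlim : Tendsto f (𝓝[>] a) (𝓝 l)) {r : ℝ} (hr : r ∈ Ioc a b) : l ≤ f r := by
  refine le_of_tendsto hlim ?_
  filter_upwards [Ioo_mem_nhdsGT_of_mem ⟨le_rfl, hr.1⟩] with s hs
  exact hf ⟨hs.1, hs.2.le.trans hr.2⟩ hr hs.2.le

end Monotonicity

section RadialODE

variable {c b : ℝ} {V u u' u'' : ℝ → ℝ}

theorem HasDerivWithinAt.rpow_mul_of_radial_ode {s : Set ℝ} {r : ℝ} (hr : 0 < r)
    (hu' : HasDerivWithinAt u' (u'' r) s r)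
    (hode : -u'' r - (c / r) * u' r + V r * u r = 0) :
    HasDerivWithinAt (fun x => x ^ c * u' x) (r ^ c * (V r * u r)) s r := by
  have hpow := (Real.hasDerivAt_rpow_const (p := c) (Or.inl hr.ne')).hasDerivWithinAt (s := s)
  refine (hpow.mul hu').congr_deriv ?_
  rw [Real.rpow_sub_one hr.ne', show u'' r = V r * u r - c / r * u' r by linarith]
  field_simp
  ring

theorem monotoneOn_rpow_mul_deriv_of_radial_ode
    (hu' : ∀ r ∈ Ioc 0 b, HasDerivWithinAt u' (u'' r) (Ioc 0 b) r)
    (hode : ∀ r ∈ Ioc 0 b, -u'' r - (c / r) * u' r + V r * u r = 0)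
    (hVu : ∀ r ∈ Ioc 0 b, 0 ≤ V r * u r) :
    MonotoneOn (fun r => r ^ c * u' r) (Ioc 0 b) :=
  (convex_Ioc 0 b).monotoneOn_of_hasDerivWithinAt_nonneg
    (fun r hr => (hu' r hr).rpow_mul_of_radial_ode hr.1 (hode r hr))
    (fun r hr => mul_nonneg (Real.rpow_nonneg hr.1.le c) (hVu r hr))

end RadialODE

theorem mul_min_max_le_of_monotoneOn_of_antitoneOn {s : Set ℝ} {f g : ℝ → ℝ}
    (hf : MonotoneOn f s) (hg : AntitoneOn g s) (hf₀ : ∀ x ∈ s, 0 ≤ f x)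
    (hg₀ : ∀ x ∈ s, 0 ≤ g x) {r t : ℝ} (hr : r ∈ s) (ht : t ∈ s) :
    f (min r t) * g (max r t) ≤ f t * g t := by
  rcases le_total r t with h | h
  · rw [min_eq_left h, max_eq_right h]
    exact mul_le_mul_of_nonneg_right (hf hr ht h) (hg₀ t ht)
  · rw [min_eq_right h, max_eq_left h]
    exact mul_le_mul_of_nonneg_left (hg ht hr h) (hf₀ t ht)

theorem neumann_pair_monotone_general (n : ℕ) (hn : 2 ≤ n) (V ξ ζ ξ' ζ' ξ'' ζ'' : ℝ → ℝ)
    (hVnonneg : ∀ r ∈ Icc (0:ℝ) 1, 0 ≤ V r)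
    (hpair : NeumannPair n V ξ ζ ξ' ζ' ξ'' ζ'') :
    (∀ r ∈ Ioc (0:ℝ) 1, 0 ≤ ξ' r) ∧
    (∀ r ∈ Ioc (0:ℝ) 1, ζ' r ≤ 0) ∧
    MonotoneOn ξ (Ioc (0:ℝ) 1) ∧
    AntitoneOn ζ (Ioc (0:ℝ) 1) ∧
    (∀ r ∈ Ioc (0:ℝ) 1, ∀ s ∈ Ioc (0:ℝ) 1,
      s ^ ((n:ℝ) - 1) * (ξ (min r s) * ζ (max r s)) ≤ s ^ ((n:ℝ) - 1) * (ξ s * ζ s)) := by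
  have hc : (0:ℝ) ≤ (n:ℝ) - 1 := by
    have : (2:ℝ) ≤ n := by exact_mod_cast hn
    linarith
  have hVu {u : ℝ → ℝ} (hu : ∀ r ∈ Ioc (0:ℝ) 1, 0 < u r) (r : ℝ) (hr : r ∈ Ioc (0:ℝ) 1) :
      0 ≤ V r * u r :=
    mul_nonneg (hVnonneg r (Ioc_subset_Icc_self hr)) (hu r hr).le
  have hξ_flux := monotoneOn_rpow_mul_deriv_of_radial_ode hpair.deriv2_xi hpair.ode_xi
    (hVu hpair.pos_xi)
  have hζ_flux := monotoneOn_rpow_mul_deriv_of_radial_ode hpair.deriv2_zeta hpair.ode_zeta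
    (hVu hpair.pos_zeta)
  have hξ_flux_lim : Tendsto (fun r => r ^ ((n:ℝ) - 1) * ξ' r) (𝓝[>] 0) (𝓝 0) := by
    simpa using ((Real.continuousAt_rpow_const 0 _ (Or.inr hc)).tendsto.mono_left
      nhdsWithin_le_nhds).mul hpair.bc_xi
  have hξ' (r : ℝ) (hr : r ∈ Ioc (0:ℝ) 1) : 0 ≤ ξ' r :=
    nonneg_of_mul_nonneg_right (hξ_flux.le_of_tendsto_nhdsGT hξ_flux_lim hr)
      (Real.rpow_pos_of_pos hr.1 _)
  have hζ' (r : ℝ) (hr : r ∈ Ioc (0:ℝ) 1) : ζ' r ≤ 0 := by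
    have : r ^ ((n:ℝ) - 1) * ζ' r ≤ 1 ^ ((n:ℝ) - 1) * ζ' 1 :=
      hζ_flux hr (right_mem_Ioc.2 one_pos) hr.2
    rw [hpair.bc_zeta, mul_zero] at this
    exact nonpos_of_mul_nonpos_right this (Real.rpow_pos_of_pos hr.1 _)
  have hξ_mono := (convex_Ioc (0:ℝ) 1).monotoneOn_of_hasDerivWithinAt_nonneg hpair.deriv_xi hξ'
  have hζ_anti := (convex_Ioc (0:ℝ) 1).antitoneOn_of_hasDerivWithinAt_nonpos hpair.deriv_zeta hζ'
  refine ⟨hξ', hζ', hξ_mono, hζ_anti, fun r hr s hs => ?_⟩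
  exact mul_le_mul_of_nonneg_left
    (mul_min_max_le_of_monotoneOn_of_antitoneOn hξ_mono hζ_anti (fun x hx => (hpair.pos_xi x hx).le)
      (fun x hx => (hpair.pos_zeta x hx).le) hr hs)
    (Real.rpow_nonneg hs.1.le _)

/-- Monotonicity of a Neumann pair: `ξ' ≥ 0` and `ζ' ≤ 0` on `(0,1]`, so `ξ` is
nondecreasing and `ζ` is nonincreasing on `(0,1]`; consequently the Green function
`G(r,s) = s^(n-1) ξ(min r s) ζ(max r s)` satisfies `G(r,s) ≤ G(s,s)` for all
`r, s ∈ (0,1]`. -/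
theorem neumann_pair_monotone (n : ℕ) (hn : 2 ≤ n) (V ξ ζ ξ' ζ' ξ'' ζ'' : ℝ → ℝ)
    (hVcont : ContinuousOn V (Icc 0 1))
    (hVnonneg : ∀ r ∈ Icc (0:ℝ) 1, 0 ≤ V r)
    (hVnontriv : ∃ r ∈ Icc (0:ℝ) 1, V r ≠ 0)
    (hpair : NeumannPair n V ξ ζ ξ' ζ' ξ'' ζ'') :
    (∀ r ∈ Ioc (0:ℝ) 1, 0 ≤ ξ' r) ∧
    (∀ r ∈ Ioc (0:ℝ) 1, ζ' r ≤ 0) ∧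
    MonotoneOn ξ (Ioc (0:ℝ) 1) ∧
    AntitoneOn ζ (Ioc (0:ℝ) 1) ∧
    (∀ r ∈ Ioc (0:ℝ) 1, ∀ s ∈ Ioc (0:ℝ) 1,
      s ^ ((n:ℝ) - 1) * (ξ (min r s) * ζ (max r s)) ≤ s ^ ((n:ℝ) - 1) * (ξ s * ζ s)) :=
  neumann_pair_monotone_general n hn V ξ ζ ξ' ζ' ξ'' ζ'' hVnonneg hpair
end

section
/- Let n ≥ 2, let B₁ ⊂ ℝⁿ be the open unit ball, fix 0 < R₁ < R₂ < 1, let A = {x ∈ ℝⁿ : R₁ < |x| < R₂}, and fix c ∈ (0,1). Let u : B₁ → ℝ be measurable with 0 ≤ u(x) ≤ 1 for a.e. x, with essential supremum of u over B₁ equal to 1, and with u(x) ≤ c for a.e. x ∈ B₁ \ A. Let φ = min(u, c) and, for σ ≥ 0, define w_σ : B₁ → ℝ by w_σ = u on B₁ \ A and w_σ = u + σ·(u − φ) on A. Then: (i) for every p > 1 there exists σ_p ≥ 0 such that |B₁|⁻¹·∫_{B₁} w_{σ_p}^{p+1} dx = 1; and (ii) for any choice of such numbers, σ_p → 0 as p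 → ∞. -/
open Set Filter MeasureTheory Topology

/-! Write `w_σ = u + σ g` with `g = 1_A (u - min u c) ∈ [0, 1]`, so that
`F_q(σ) = ∫_{B₁} w_σ ^ q` is continuous in `σ` and `F_q(0) ≤ |B₁|` because `u ≤ 1`.
Since `essSup u = 1` while `u ≤ c` off `A`, for every `b ∈ (c, 1)` the set `A ∩ {u > b}` has
positive measure, and `w_σ ≥ b + σ (b - c)` there; hence
`F_q(σ) ≥ (b + σ (b - c)) ^ q |A ∩ {u > b}|`. Letting `σ → ∞` and applying the intermediate
value theorem gives (i). For (ii), if `σ_p ≥ ε`, choose `b` so close to `1` that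
`b + ε (b - c) > 1`: the lower bound then grows exponentially in `p`, contradicting
`F_{p+1}(σ_p) = |B₁|`. -/

variable {α : Type*}

theorem add_mul_mem_Icc {a b σ : ℝ} (ha : a ∈ Icc 0 1) (hb : b ∈ Icc 0 1) (hσ : 0 ≤ σ) :
    a + σ * b ∈ Icc 0 (1 + σ) := by
  obtain ⟨ha0, ha1⟩ := ha
  obtain ⟨hb0, hb1⟩ := hb
  constructor <;> nlinarith

section Bounded

variable [MeasurableSpace α] {μ : Measure α} [IsFiniteMeasure μ] {f g : α → ℝ}

theorem integrable_rpow_add_mul (hf : Measurable f) (hg : Measurable g)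
    (hf01 : ∀ᵐ x ∂μ, f x ∈ Icc 0 1) (hg01 : ∀ᵐ x ∂μ, g x ∈ Icc 0 1) {σ q : ℝ} (hσ : 0 ≤ σ)
    (hq : 0 ≤ q) : Integrable (fun x => (f x + σ * g x) ^ q) μ := by
  refine .of_bound (by fun_prop) ((1 + σ) ^ q) ?_
  filter_upwards [hf01, hg01] with x hfx hgx
  obtain ⟨h0, h1⟩ := add_mul_mem_Icc hfx hgx hσ
  rw [Real.norm_of_nonneg (Real.rpow_nonneg h0 q)]
  exact Real.rpow_le_rpow h0 h1 hq

theorem continuousOn_integral_rpow_add_mul (hf : Measurable f) (hg : Measurable g)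
    (hf01 : ∀ᵐ x ∂μ, f x ∈ Icc 0 1) (hg01 : ∀ᵐ x ∂μ, g x ∈ Icc 0 1) {q : ℝ} (hq : 0 ≤ q)
    (M : ℝ) : ContinuousOn (fun σ => ∫ x, (f x + σ * g x) ^ q ∂μ) (Icc 0 M) := by
  refine continuousOn_of_dominated (bound := fun _ => (1 + M) ^ q)
    (fun σ _ => by fun_prop) (fun σ hσ => ?_) (integrable_const _)
    (.of_forall fun x => by fun_prop (disch := exact hq))
  filter_upwards [hf01, hg01] with x hfx hgx
  obtain ⟨h0, h1⟩ := add_mul_mem_Icc hfx hgx hσ.1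
  rw [Real.norm_of_nonneg (Real.rpow_nonneg h0 q)]
  exact Real.rpow_le_rpow h0 (by linarith [hσ.2]) hq

theorem integral_rpow_le_measureReal_univ (hf01 : ∀ᵐ x ∂μ, f x ∈ Icc 0 1) {q : ℝ}
    (hq : 0 ≤ q) : ∫ x, f x ^ q ∂μ ≤ μ.real univ := by
  calc ∫ x, f x ^ q ∂μ ≤ ∫ _, (1 : ℝ) ∂μ := by
        refine integral_mono_of_nonneg ?_ (integrable_const 1) ?_
        · filter_upwards [hf01] with x hx using Real.rpow_nonneg hx.1 q
        · filter_upwards [hf01] with x hx using Real.rpow_le_one hx.1 hx.2 hq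
    _ = μ.real univ := by simp

theorem rpow_mul_measureReal_le_integral_rpow {h : α → ℝ} (h0 : 0 ≤ᵐ[μ] h) {q K : ℝ}
    (hq : 0 ≤ q) (hint : Integrable (fun x => h x ^ q) μ) (hK : 0 ≤ K) {T : Set α}
    (hT : ∀ x ∈ T, K ≤ h x) : K ^ q * μ.real T ≤ ∫ x, h x ^ q ∂μ := by
  calc K ^ q * μ.real T ≤ K ^ q * μ.real {x | K ^ q ≤ h x ^ q} :=
        mul_le_mul_of_nonneg_left (measureReal_mono fun x hx =>
          Real.rpow_le_rpow hK (hT x hx) hq) (by positivity)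
    _ ≤ ∫ x, h x ^ q ∂μ :=
        mul_meas_ge_le_integral_of_nonneg (h0.mono fun x hx => Real.rpow_nonneg hx q) hint _

end Bounded

noncomputable def excessOn (A : Set α) (u : α → ℝ) (c : ℝ) : α → ℝ :=
  A.indicator fun x => u x - min (u x) c

section ExcessOn

variable {A : Set α} {u : α → ℝ} {c : ℝ}

theorem excessOn_mem_Icc (hc : 0 ≤ c) {x : α} (hx : u x ∈ Icc 0 1) :
    excessOn A u c x ∈ Icc 0 1 := by
  unfold excessOn indicator
  split_ifs
  · constructor <;> cases min_cases (u x) c <;> linarith [hx.1, hx.2]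
  · simp

theorem le_add_mul_excessOn {b σ : ℝ} (hcb : c ≤ b) (hσ : 0 ≤ σ) {x : α} (hxA : x ∈ A)
    (hbx : b < u x) : b + σ * (b - c) ≤ u x + σ * excessOn A u c x := by
  rw [excessOn, indicator_of_mem hxA, min_eq_right (hcb.trans hbx.le)]
  nlinarith

variable [MeasurableSpace α] {μ : Measure α}

theorem measurable_excessOn (hA : MeasurableSet A) (hu : Measurable u) :
    Measurable (excessOn A u c) :=
  (hu.sub (hu.min measurable_const)).indicator hA

theorem ae_excessOn_mem_Icc (hc : 0 ≤ c) (hu01 : ∀ᵐ x ∂μ, u x ∈ Icc 0 1) :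
    ∀ᵐ x ∂μ, excessOn A u c x ∈ Icc 0 1 :=
  hu01.mono fun _ => excessOn_mem_Icc hc

theorem measureReal_setOf_mem_and_lt_pos [IsFiniteMeasure μ] [NeZero μ] (hu0 : 0 ≤ᵐ[μ] u)
    (hle : ∀ᵐ x ∂μ, x ∉ A → u x ≤ c) {b : ℝ} (hcb : c ≤ b) (hb : b < essSup u μ) :
    0 < μ.real {x | x ∈ A ∧ b < u x} := by
  have hfreq : ∃ᵐ x ∂μ, b < u x :=
    frequently_lt_of_lt_limsup (isCoboundedUnder_le_of_eventually_le _ hu0) hb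
  have hfreqA : ∃ᵐ x ∂μ, x ∈ A ∧ b < u x := (hfreq.and_eventually hle).mono
    fun x ⟨hbx, hx⟩ => ⟨by_contra fun hxA => (hx hxA).not_gt (hcb.trans_lt hbx), hbx⟩
  exact ENNReal.toReal_pos (frequently_ae_iff.1 hfreqA) (measure_ne_top _ _)

theorem mul_measureReal_le_integral_rpow_excess [IsFiniteMeasure μ] (hA : MeasurableSet A)
    (hu : Measurable u) (hu01 : ∀ᵐ x ∂μ, u x ∈ Icc 0 1) (hc : 0 ≤ c) {b σ q : ℝ}
    (hcb : c ≤ b) (hσ : 0 ≤ σ) (hq : 0 ≤ q) :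
    (b + σ * (b - c)) ^ q * μ.real {x | x ∈ A ∧ b < u x} ≤
      ∫ x, (u x + σ * excessOn A u c x) ^ q ∂μ := by
  have hg01 := ae_excessOn_mem_Icc (A := A) hc hu01
  refine rpow_mul_measureReal_le_integral_rpow ?_ hq
    (integrable_rpow_add_mul hu (measurable_excessOn hA hu) hu01 hg01 hσ hq) (by nlinarith)
    fun x ⟨hxA, hbx⟩ => le_add_mul_excessOn hcb hσ hxA hbx
  filter_upwards [hu01, hg01] with x hux hgx
  exact (add_mul_mem_Icc hux hgx hσ).1

variable [IsFiniteMeasure μ] [NeZero μ]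

theorem tendsto_integral_rpow_excess_atTop (hA : MeasurableSet A) (hu : Measurable u)
    (hu01 : ∀ᵐ x ∂μ, u x ∈ Icc 0 1) (hsup : essSup u μ = 1) (hle : ∀ᵐ x ∂μ, x ∉ A → u x ≤ c)
    (hc : c ∈ Ico 0 1) {q : ℝ} (hq : 0 < q) :
    Tendsto (fun σ => ∫ x, (u x + σ * excessOn A u c x) ^ q ∂μ) atTop atTop := by
  obtain ⟨b, hcb, hb1⟩ := exists_between hc.2
  have hm := measureReal_setOf_mem_and_lt_pos (A := A) (hu01.mono fun _ hx => hx.1) hle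
    hcb.le (hsup ▸ hb1)
  have hgrow : Tendsto (fun σ => (b + σ * (b - c)) ^ q * μ.real {x | x ∈ A ∧ b < u x})
      atTop atTop :=
    ((tendsto_rpow_atTop hq).comp (tendsto_atTop_add_const_left _ b
      (tendsto_id.atTop_mul_const (sub_pos.2 hcb)))).atTop_mul_const hm
  refine tendsto_atTop_mono' _ ?_ hgrow
  filter_upwards [eventually_ge_atTop 0] with σ hσ using
    mul_measureReal_le_integral_rpow_excess hA hu hu01 hc.1 hcb.le hσ hq.le

theorem exists_integral_rpow_excess_eq (hA : MeasurableSet A) (hu : Measurable u)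
    (hu01 : ∀ᵐ x ∂μ, u x ∈ Icc 0 1) (hsup : essSup u μ = 1) (hle : ∀ᵐ x ∂μ, x ∉ A → u x ≤ c)
    (hc : c ∈ Ico 0 1) {q : ℝ} (hq : 0 < q) :
    ∃ σ ≥ 0, ∫ x, (u x + σ * excessOn A u c x) ^ q ∂μ = μ.real univ := by
  obtain ⟨M, hM, hM0⟩ := (((tendsto_integral_rpow_excess_atTop hA hu hu01 hsup hle hc
    hq).eventually_ge_atTop (μ.real univ)).and (eventually_ge_atTop 0)).exists
  have h0 : ∫ x, (u x + 0 * excessOn A u c x) ^ q ∂μ ≤ μ.real univ := by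
    simpa using integral_rpow_le_measureReal_univ hu01 hq.le
  obtain ⟨σ, hσ, hσeq⟩ := intermediate_value_Icc hM0 (continuousOn_integral_rpow_add_mul hu
    (measurable_excessOn hA hu) hu01 (ae_excessOn_mem_Icc hc.1 hu01) hq.le M) ⟨h0, hM⟩
  exact ⟨σ, hσ.1, hσeq⟩

theorem tendsto_zero_of_integral_rpow_excess_eq (hA : MeasurableSet A) (hu : Measurable u)
    (hu01 : ∀ᵐ x ∂μ, u x ∈ Icc 0 1) (hsup : essSup u μ = 1) (hle : ∀ᵐ x ∂μ, x ∉ A → u x ≤ c)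
    (hc : c ∈ Ico 0 1) {ι : Type*} {l : Filter ι} {q σ : ι → ℝ} (hq : Tendsto q l atTop)
    (hσ : ∀ᶠ i in l, 0 ≤ σ i ∧ ∫ x, (u x + σ i * excessOn A u c x) ^ q i ∂μ = μ.real univ) :
    Tendsto σ l (𝓝 0) := by
  rw [Metric.tendsto_nhds]
  intro ε hε
  have hnear : ∀ᶠ b in 𝓝 (1 : ℝ), c < b ∧ 1 < b + ε * (b - c) := by
    have hcont : Continuous fun b : ℝ => b + ε * (b - c) := by fun_prop
    exact (eventually_gt_nhds hc.2).and
      ((hcont.tendsto 1).eventually (eventually_gt_nhds (by nlinarith [hc.2])))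
  obtain ⟨b, ⟨hcb, hK⟩, hb1⟩ :=
    ((eventually_nhdsWithin_of_eventually_nhds hnear).and self_mem_nhdsWithin).exists
      (f := 𝓝[<] (1 : ℝ))
  have hm := measureReal_setOf_mem_and_lt_pos (A := A) (hu01.mono fun _ hx => hx.1) hle
    hcb.le (hsup ▸ hb1)
  have hgrow := ((tendsto_rpow_atTop_of_base_gt_one _ hK).comp hq).atTop_mul_const hm
  filter_upwards [hσ, hgrow.eventually_gt_atTop (μ.real univ), hq.eventually_ge_atTop 0]
    with i ⟨hσ0, hσeq⟩ hbig hq0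
  rw [Real.dist_0_eq_abs, abs_of_nonneg hσ0]
  by_contra! hεσ
  have hmono : (b + ε * (b - c)) ^ q i ≤ (b + σ i * (b - c)) ^ q i := by gcongr
  have hlow := mul_measureReal_le_integral_rpow_excess hA hu hu01 hc.1 hcb.le hσ0 hq0
  rw [hσeq] at hlow
  exact hbig.not_ge ((mul_le_mul_of_nonneg_right hmono hm.le).trans hlow)

end ExcessOn

theorem approximating_sequence_general (n : ℕ) (R₁ R₂ c : ℝ)
    (hc : c ∈ Ioo (0:ℝ) 1)
    (u : EuclideanSpace ℝ (Fin n) → ℝ) (hmeas : Measurable u)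
    (h01 : ∀ᵐ x ∂(volume.restrict (Metric.ball (0 : EuclideanSpace ℝ (Fin n)) 1)),
      0 ≤ u x ∧ u x ≤ 1)
    (hsup : essSup u (volume.restrict (Metric.ball (0 : EuclideanSpace ℝ (Fin n)) 1)) = 1)
    (hle : ∀ᵐ x ∂(volume.restrict
        (Metric.ball (0 : EuclideanSpace ℝ (Fin n)) 1 \
          {x : EuclideanSpace ℝ (Fin n) | R₁ < ‖x‖ ∧ ‖x‖ < R₂})), u x ≤ c)
    (w : ℝ → EuclideanSpace ℝ (Fin n) → ℝ)
    (hw : ∀ σ x, w σ x =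
      if R₁ < ‖x‖ ∧ ‖x‖ < R₂ then u x + σ * (u x - min (u x) c) else u x) :
    (∀ p > (1:ℝ), ∃ σ ≥ (0:ℝ),
      (volume (Metric.ball (0 : EuclideanSpace ℝ (Fin n)) 1)).toReal⁻¹ *
        ∫ x in Metric.ball (0 : EuclideanSpace ℝ (Fin n)) 1, w σ x ^ (p + 1) = 1) ∧
    (∀ σf : ℝ → ℝ,
      (∀ p > (1:ℝ), 0 ≤ σf p ∧
        (volume (Metric.ball (0 : EuclideanSpace ℝ (Fin n)) 1)).toReal⁻¹ *
          ∫ x in Metric.ball (0 : EuclideanSpace ℝ (Fin n)) 1, w (σf p) x ^ (p + 1) = 1) →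
      Tendsto σf atTop (𝓝 0)) := by
  set B := Metric.ball (0 : EuclideanSpace ℝ (Fin n)) 1
  set A := {x : EuclideanSpace ℝ (Fin n) | R₁ < ‖x‖ ∧ ‖x‖ < R₂}
  have hA : MeasurableSet A := (isOpen_Ioo.preimage continuous_norm).measurableSet
  have hB : volume B ≠ 0 := (Metric.measure_ball_pos volume _ one_pos).ne'
  have : IsFiniteMeasure (volume.restrict B) := isFiniteMeasure_restrict.2 measure_ball_lt_top.ne
  have : NeZero (volume.restrict B) := ⟨by simpa using hB⟩
  have hV : (volume B).toReal = (volume.restrict B).real univ :=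
    (measureReal_restrict_apply_univ B).symm
  have hV0 : (volume.restrict B).real univ ≠ 0 :=
    hV ▸ (ENNReal.toReal_pos hB measure_ball_lt_top.ne).ne'
  have hw' : ∀ σ x, w σ x = u x + σ * excessOn A u c x := fun σ x => by
    rw [hw, excessOn]
    split_ifs with hx
    · rw [indicator_of_mem (show x ∈ A from hx)]
    · rw [indicator_of_notMem (show x ∉ A from hx), mul_zero, add_zero]
  have hle' : ∀ᵐ x ∂(volume.restrict B), x ∉ A → u x ≤ c :=
    (ae_restrict_iff' hA.compl).1 (by rwa [Measure.restrict_restrict hA.compl, inter_comm])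
  have hc' : c ∈ Ico 0 1 := Ioo_subset_Ico_self hc
  simp only [hw', hV, inv_mul_eq_one₀ hV0, eq_comm (a := (volume.restrict B).real univ)]
  exact ⟨fun p hp => exists_integral_rpow_excess_eq hA hmeas h01 hsup hle' hc' (by linarith),
    fun σf hσf => tendsto_zero_of_integral_rpow_excess_eq hA hmeas h01 hsup hle' hc'
      (tendsto_atTop_add_const_right _ 1 tendsto_id) ((eventually_gt_atTop 1).mono hσf)⟩

/-- Approximation lemma: let `u` be measurable on the unit ball `B₁ ⊂ ℝⁿ` with
`0 ≤ u ≤ 1` a.e., `essSup u = 1` on `B₁`, and `u ≤ c` a.e. off the annulus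
`A = {R₁ < |x| < R₂}`. With `φ = min(u, c)` and `w_σ = u` on `B₁ \ A`,
`w_σ = u + σ(u - φ)` on `A`, we have: (i) for every `p > 1` there is `σ_p ≥ 0` with
`|B₁|⁻¹ ∫_{B₁} w_{σ_p}^{p+1} = 1`; (ii) for any choice of such `σ_p`, `σ_p → 0` as
`p → ∞`. -/
theorem approximating_sequence (n : ℕ) (hn : 2 ≤ n) (R₁ R₂ c : ℝ)
    (hR₁ : 0 < R₁) (hR₁₂ : R₁ < R₂) (hR₂ : R₂ < 1) (hc : c ∈ Ioo (0:ℝ) 1)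
    (u : EuclideanSpace ℝ (Fin n) → ℝ) (hmeas : Measurable u)
    (h01 : ∀ᵐ x ∂(volume.restrict (Metric.ball (0 : EuclideanSpace ℝ (Fin n)) 1)),
      0 ≤ u x ∧ u x ≤ 1)
    (hsup : essSup u (volume.restrict (Metric.ball (0 : EuclideanSpace ℝ (Fin n)) 1)) = 1)
    (hle : ∀ᵐ x ∂(volume.restrict
        (Metric.ball (0 : EuclideanSpace ℝ (Fin n)) 1 \
          {x : EuclideanSpace ℝ (Fin n) | R₁ < ‖x‖ ∧ ‖x‖ < R₂})), u x ≤ c)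
    (w : ℝ → EuclideanSpace ℝ (Fin n) → ℝ)
    (hw : ∀ σ x, w σ x =
      if R₁ < ‖x‖ ∧ ‖x‖ < R₂ then u x + σ * (u x - min (u x) c) else u x) :
    (∀ p > (1:ℝ), ∃ σ ≥ (0:ℝ),
      (volume (Metric.ball (0 : EuclideanSpace ℝ (Fin n)) 1)).toReal⁻¹ *
        ∫ x in Metric.ball (0 : EuclideanSpace ℝ (Fin n)) 1, w σ x ^ (p + 1) = 1) ∧
    (∀ σf : ℝ → ℝ,
      (∀ p > (1:ℝ), 0 ≤ σf p ∧
        (volume (Metric.ball (0 : EuclideanSpace ℝ (Fin n)) 1)).toReal⁻¹ *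
          ∫ x in Metric.ball (0 : EuclideanSpace ℝ (Fin n)) 1, w (σf p) x ^ (p + 1) = 1) →
      Tendsto σf atTop (𝓝 0)) :=
  approximating_sequence_general n R₁ R₂ c hc u hmeas h01 hsup hle w hw
end
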